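/- With the matching M on 2^[n+2] defined from I = (u_1, u_2, x_1^{e_1},...,x_n^{e_n}) as above, any two distinct M-critical vertices T, T' ⊆ [n+2] have distinct monomial labels: m_T ≠ m_{T'}. -/
import Mathlib


open Finset

def v1 {n : ℕ} : Fin 2 ⊕ Fin n := Sum.inl 0
def v2 {n : ℕ} : Fin 2 ⊕ Fin n := Sum.inl 1

/-- Generators of `I`: index `inl 0 ↦ u₁` (exponents `a`), `inl 1 ↦ u₂` (exponents `b`),
`inr i ↦ x_i^{e_i}`; monomials modeled as exponent vectors. -/
def gen {n : ℕ} (a b e : Fin n → ℕ) : Fin 2 ⊕ Fin n → Fin n → ℕ :=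
  Sum.elim (fun t => if t = 0 then a else b) (fun i j => if j = i then e i else 0)

/-- The lcm label `m_T` of a subset of generators (pointwise max of exponent vectors). -/
def mT {n : ℕ} (a b e : Fin n → ℕ) (T : Finset (Fin 2 ⊕ Fin n)) : Fin n → ℕ :=
  fun i => T.sup fun k => gen a b e k i

def P0 {n : ℕ} (a b : Fin n → ℕ) : Finset (Fin 2 ⊕ Fin n) :=
  (Finset.univ.filter fun i => a i = b i).image Sum.inr

def P1 {n : ℕ} (a b : Fin n → ℕ) : Finset (Fin 2 ⊕ Fin n) :=
  (Finset.univ.filter fun i => b i < a i).image Sum.inr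

def P2 {n : ℕ} (a b : Fin n → ℕ) : Finset (Fin 2 ⊕ Fin n) :=
  (Finset.univ.filter fun i => a i < b i).image Sum.inr

def setA {n : ℕ} (a : Fin n → ℕ) : Finset (Fin 2 ⊕ Fin n) :=
  (Finset.univ.filter fun i => 0 < a i).image Sum.inr

def setB {n : ℕ} (b : Fin n → ℕ) : Finset (Fin 2 ⊕ Fin n) :=
  (Finset.univ.filter fun i => 0 < b i).image Sum.inr

/-- The matching `M` on the Hasse diagram of `2^[n+2]`: `MM a b T T'` means `(T,T')` is an
edge of the matching, given by the four families of the paper. -/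
def MM {n : ℕ} (a b : Fin n → ℕ) (T T' : Finset (Fin 2 ⊕ Fin n)) : Prop :=
  (v1 ∈ T ∧ v2 ∈ T ∧ P1 a b ⊆ T ∧ T' = T.erase v1) ∨
  (v1 ∈ T ∧ v2 ∈ T ∧ ¬ P1 a b ⊆ T ∧ P2 a b ⊆ T ∧ T' = T.erase v2) ∨
  (v1 ∈ T ∧ v2 ∉ T ∧ setA a ⊆ T ∧ T' = T.erase v1) ∨
  (v1 ∉ T ∧ v2 ∈ T ∧ setB b ⊆ T ∧ T ≠ Finset.univ.erase v1 ∧ T' = T.erase v2)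

/-- `T` is an `M`-critical vertex: it is incident to no edge of the matching. -/
def critical {n : ℕ} (a b : Fin n → ℕ) (T : Finset (Fin 2 ⊕ Fin n)) : Prop :=
  ∀ T', ¬ MM a b T T' ∧ ¬ MM a b T' T

section Aux

variable {n : ℕ} (a b e : Fin n → ℕ)

lemma v1_ne_v2 : (v1 : Fin 2 ⊕ Fin n) ≠ v2 := by simp [v1, v2]

lemma mT_eq (T : Finset (Fin 2 ⊕ Fin n)) (i : Fin n) :
    mT a b e T i = max (if v1 ∈ T then a i else 0)
      (max (if v2 ∈ T then b i else 0) (if Sum.inr i ∈ T then e i else 0)) := by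
  unfold mT
  apply le_antisymm
  · apply Finset.sup_le
    intro k hk
    rcases k with f | j
    · have hf : Sum.inl f = (v1 : Fin 2 ⊕ Fin n) ∨ Sum.inl f = (v2 : Fin 2 ⊕ Fin n) := by
        fin_cases f <;> simp [v1, v2]
      rcases hf with hf | hf <;> rw [hf] at hk ⊢
      · have : gen a b e v1 i = a i := by simp [gen, v1]
        rw [this, if_pos hk]
        exact le_max_left _ _
      · have : gen a b e v2 i = b i := by simp [gen, v2]
        rw [this, if_pos hk]
        exact le_max_of_le_right (le_max_left _ _)
    · have : gen a b e (Sum.inr j) i = if i = j then e j else 0 := by simp [gen]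
      rw [this]
      by_cases hji : i = j
      · subst hji
        rw [if_pos rfl, if_pos hk]
        exact le_max_of_le_right (le_max_right _ _)
      · rw [if_neg hji]
        exact Nat.zero_le _
  · rcases le_total (a i) 0 with _ | _ <;>
    · apply max_le
      · split_ifs with h
        · exact Finset.le_sup (f := fun k => gen a b e k i) (b := v1) h |>.trans_eq' (by simp [gen, v1])
        · exact Nat.zero_le _
      · apply max_le
        · split_ifs with h
          · exact Finset.le_sup (f := fun k => gen a b e k i) (b := v2) h |>.trans_eq' (by simp [gen, v2])
          · exact Nat.zero_le _
        · split_ifs with h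
          · exact Finset.le_sup (f := fun k => gen a b e k i) (b := Sum.inr i) h |>.trans_eq' (by simp [gen])
          · exact Nat.zero_le _

lemma P1_subset_iff (T : Finset (Fin 2 ⊕ Fin n)) :
    P1 a b ⊆ T ↔ ∀ i, b i < a i → Sum.inr i ∈ T := by
  simp [P1, Finset.image_subset_iff]

lemma P2_subset_iff (T : Finset (Fin 2 ⊕ Fin n)) :
    P2 a b ⊆ T ↔ ∀ i, a i < b i → Sum.inr i ∈ T := by
  simp [P2, Finset.image_subset_iff]

lemma setA_subset_iff (T : Finset (Fin 2 ⊕ Fin n)) :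
    setA a ⊆ T ↔ ∀ i, 0 < a i → Sum.inr i ∈ T := by
  simp [setA, Finset.image_subset_iff]

lemma setB_subset_iff (T : Finset (Fin 2 ⊕ Fin n)) :
    setB b ⊆ T ↔ ∀ i, 0 < b i → Sum.inr i ∈ T := by
  simp [setB, Finset.image_subset_iff]

variable {a b}

lemma crit1 {T : Finset (Fin 2 ⊕ Fin n)} (hT : critical a b T)
    (h1 : v1 ∈ T) (h2 : v2 ∈ T) (hP : P1 a b ⊆ T) : False :=
  (hT (T.erase v1)).1 (Or.inl ⟨h1, h2, hP, rfl⟩)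

lemma crit2 {T : Finset (Fin 2 ⊕ Fin n)} (hT : critical a b T)
    (h1 : v1 ∈ T) (h2 : v2 ∈ T) (hP : P2 a b ⊆ T) : False := by
  by_cases hP1 : P1 a b ⊆ T
  · exact crit1 hT h1 h2 hP1
  · exact (hT (T.erase v2)).1 (Or.inr (Or.inl ⟨h1, h2, hP1, hP, rfl⟩))

lemma crit3 {T : Finset (Fin 2 ⊕ Fin n)} (hT : critical a b T)
    (h1 : v1 ∉ T) (h2 : v2 ∈ T) (hP : P1 a b ⊆ T) : False :=
  (hT (insert v1 T)).2 (Or.inl ⟨Finset.mem_insert_self _ _, Finset.mem_insert_of_mem h2,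
    hP.trans (Finset.subset_insert _ _), (Finset.erase_insert h1).symm⟩)

lemma crit4 {T : Finset (Fin 2 ⊕ Fin n)} (hT : critical a b T)
    (h1 : v1 ∈ T) (h2 : v2 ∉ T) (hA : setA a ⊆ T) : False :=
  (hT (T.erase v1)).1 (Or.inr (Or.inr (Or.inl ⟨h1, h2, hA, rfl⟩)))

lemma crit5 {T : Finset (Fin 2 ⊕ Fin n)} (hT : critical a b T)
    (h1 : v1 ∉ T) (h2 : v2 ∉ T) (hA : setA a ⊆ T) : False := by
  refine (hT (insert v1 T)).2 (Or.inr (Or.inr (Or.inl ⟨Finset.mem_insert_self _ _, ?_,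
    hA.trans (Finset.subset_insert _ _), (Finset.erase_insert h1).symm⟩)))
  simp only [Finset.mem_insert]
  exact fun h => h.elim (fun h => v1_ne_v2 h.symm) h2

lemma crit6 {T : Finset (Fin 2 ⊕ Fin n)} (hT : critical a b T)
    (h1 : v1 ∉ T) (h2 : v2 ∉ T) (hB : setB b ⊆ T)
    (hu : insert v2 T ≠ Finset.univ.erase v1) : False := by
  refine (hT (insert v2 T)).2 (Or.inr (Or.inr (Or.inr ⟨?_, Finset.mem_insert_self _ _,
    hB.trans (Finset.subset_insert _ _), hu, (Finset.erase_insert h2).symm⟩)))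
  simp only [Finset.mem_insert]
  exact fun h => h.elim v1_ne_v2 h1

/-- The label contribution of the two special generators. -/
abbrev lab (a b : Fin n → ℕ) (T : Finset (Fin 2 ⊕ Fin n)) (i : Fin n) : ℕ :=
  max (if v1 ∈ T then a i else 0) (if v2 ∈ T then b i else 0)

section Cases

variable {T T' : Finset (Fin 2 ⊕ Fin n)}
  (hT : critical a b T) (hT' : critical a b T')
  (hinr : ∀ i, Sum.inr i ∈ T ↔ Sum.inr i ∈ T')
  (key : ∀ i, Sum.inr i ∉ T → lab a b T i = lab a b T' i)

include hT hinr key in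
lemma case01 (h1 : v1 ∉ T) (h2 : v2 ∉ T) (h1' : v1 ∈ T') (h2' : v2 ∉ T') : False := by
  apply crit5 hT h1 h2
  rw [setA_subset_iff]
  intro i hi
  by_contra hiT
  have := key i hiT
  simp only [lab, if_neg h1, if_neg h2, if_pos h1', if_neg h2'] at this
  omega

include hT hT' hinr key in
lemma case02 (hab : ∀ i, 0 < a i + b i) (h1 : v1 ∉ T) (h2 : v2 ∉ T) (h1' : v1 ∉ T') (h2' : v2 ∈ T') : False := by
  have hB : setB b ⊆ T := by
    rw [setB_subset_iff]
    intro i hi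
    by_contra hiT
    have := key i hiT
    simp only [lab, if_neg h1, if_neg h2, if_neg h1', if_pos h2'] at this
    omega
  by_cases hu : insert v2 T = Finset.univ.erase v1
  · have hTT' : T' = insert v2 T := by
      ext k
      rcases k with f | j
      · fin_cases f
        · show v1 ∈ T' ↔ v1 ∈ insert v2 T
          simp only [Finset.mem_insert]
          constructor
          · exact fun h => absurd h h1'
          · exact fun h => absurd (h.resolve_left (fun h => v1_ne_v2 h)) h1
        · show v2 ∈ T' ↔ v2 ∈ insert v2 T
          simp [h2']
      · simp only [Finset.mem_insert]
        constructor
        · intro h; exact Or.inr ((hinr j).mpr h)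
        · intro h
          rcases h with h | h
          · exact absurd h (by simp [v2])
          · exact (hinr j).mp h
    apply crit3 hT' h1' h2'
    rw [P1_subset_iff]
    intro i _
    rw [hTT', hu]
    simp [v1]
  · exact crit6 hT h1 h2 hB hu

include hT' hinr key in
lemma case03 (hab : ∀ i, 0 < a i + b i) (h1 : v1 ∉ T) (h2 : v2 ∉ T) (h1' : v1 ∈ T') (h2' : v2 ∈ T') : False := by
  apply crit1 hT' h1' h2'
  rw [P1_subset_iff]
  intro i _
  rw [← hinr]
  by_contra hiT
  have hk := key i hiT
  have hi2 := hab i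
  simp only [lab, if_neg h1, if_neg h2, if_pos h1', if_pos h2'] at hk
  omega

include hT' hinr key in
lemma case12 (h1 : v1 ∈ T) (h2 : v2 ∉ T) (h1' : v1 ∉ T') (h2' : v2 ∈ T') : False := by
  apply crit3 hT' h1' h2'
  rw [P1_subset_iff]
  intro i hi
  rw [← hinr]
  by_contra hiT
  have := key i hiT
  simp only [lab, if_pos h1, if_neg h2, if_neg h1', if_pos h2'] at this
  omega

include hT' hinr key in
lemma case1_12 (h1 : v1 ∈ T) (h2 : v2 ∉ T) (h1' : v1 ∈ T') (h2' : v2 ∈ T') : False := by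
  apply crit2 hT' h1' h2'
  rw [P2_subset_iff]
  intro i hi
  rw [← hinr]
  by_contra hiT
  have := key i hiT
  simp only [lab, if_pos h1, if_neg h2, if_pos h1', if_pos h2'] at this
  omega

include hT' hinr key in
lemma case2_12 (h1 : v1 ∉ T) (h2 : v2 ∈ T) (h1' : v1 ∈ T') (h2' : v2 ∈ T') : False := by
  apply crit1 hT' h1' h2'
  rw [P1_subset_iff]
  intro i hi
  rw [← hinr]
  by_contra hiT
  have := key i hiT
  simp only [lab, if_neg h1, if_pos h2, if_pos h1', if_pos h2'] at this
  omega

end Cases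

end Aux

/-- distinct `M`-critical vertices have distinct monomial labels. -/
theorem stmt10 (n : ℕ) (a b e : Fin n → ℕ) (hab : ∀ i, 0 < a i + b i)
    (he : ∀ i, max (a i) (b i) < e i)
    (T T' : Finset (Fin 2 ⊕ Fin n))
    (hT : critical a b T) (hT' : critical a b T') (hne : T ≠ T') :
    mT a b e T ≠ mT a b e T' := by
  intro hm
  have hinr : ∀ i, Sum.inr i ∈ T ↔ Sum.inr i ∈ T' := by
    intro i
    have hmi := congrFun hm i
    rw [mT_eq, mT_eq] at hmi
    have hei := he i
    constructor
    · intro h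
      by_contra h'
      rw [if_pos h, if_neg h'] at hmi
      split_ifs at hmi <;> omega
    · intro h
      by_contra h'
      rw [if_pos h, if_neg h'] at hmi
      split_ifs at hmi <;> omega
  have key : ∀ i, Sum.inr i ∉ T → lab a b T i = lab a b T' i := by
    intro i hi
    have hmi := congrFun hm i
    rw [mT_eq, mT_eq, if_neg hi, if_neg (fun h => hi ((hinr i).mpr h))] at hmi
    simpa [lab] using hmi
  have hinr' : ∀ i, Sum.inr i ∈ T' ↔ Sum.inr i ∈ T := fun i => (hinr i).symm
  have key' : ∀ i, Sum.inr i ∉ T' → lab a b T' i = lab a b T i :=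
    fun i hi => (key i (fun h => hi ((hinr i).mp h))).symm
  by_cases h1 : v1 ∈ T <;> by_cases h2 : v2 ∈ T <;>
    by_cases h1' : v1 ∈ T' <;> by_cases h2' : v2 ∈ T'
  · apply hne; ext k
    rcases k with f | j
    · fin_cases f
      · show v1 ∈ T ↔ v1 ∈ T'; simp [h1, h1']
      · show v2 ∈ T ↔ v2 ∈ T'; simp [h2, h2']
    · exact hinr j
  · exact case1_12 hT hinr' key' h1' h2' h1 h2
  · exact case2_12 hT hinr' key' h1' h2' h1 h2
  · exact case03 hT hinr' key' hab h1' h2' h1 h2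
  · exact case1_12 hT' hinr key h1 h2 h1' h2'
  · apply hne; ext k
    rcases k with f | j
    · fin_cases f
      · show v1 ∈ T ↔ v1 ∈ T'; simp [h1, h1']
      · show v2 ∈ T ↔ v2 ∈ T'; simp [h2, h2']
    · exact hinr j
  · exact case12 hT' hinr key h1 h2 h1' h2'
  · exact case01 hT' hinr' key' h1' h2' h1 h2
  · exact case2_12 hT' hinr key h1 h2 h1' h2'
  · exact case12 hT hinr' key' h1' h2' h1 h2
  · apply hne; ext k
    rcases k with f | j
    · fin_cases f
      · show v1 ∈ T ↔ v1 ∈ T'; simp [h1, h1']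
      · show v2 ∈ T ↔ v2 ∈ T'; simp [h2, h2']
    · exact hinr j
  · exact case02 hT' hT hinr' key' hab h1' h2' h1 h2
  · exact case03 hT' hinr key hab h1 h2 h1' h2'
  · exact case01 hT hinr key h1 h2 h1' h2'
  · exact case02 hT hT' hinr key hab h1 h2 h1' h2'
  · apply hne; ext k
    rcases k with f | j
    · fin_cases f
      · show v1 ∈ T ↔ v1 ∈ T'; simp [h1, h1']
      · show v2 ∈ T ↔ v2 ∈ T'; simp [h2, h2']
    · exact hinr j
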